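/- arXiv:2410.00444 — 8 statements merged into one kernel-verified Lean document; each statement's English description precedes it below -/
import Mathlib

section
/- Let R be a ring and A an additive subgroup of R. Then the additive subgroup generated by all commutators [a, x] with a in A, x in R equals the additive subgroup generated by all commutators [s, x] with s in the subring generated by A and x in R. -/
/- For any additive subgroup `M`, the elements `s` with `[s, R] ⊆ M` form a subring, since
`[st, x] = [s, tx] + [t, xs]`. For `M = [A, R]` this subring contains `A`, hence the subring
generated by `A`. -/

/-- The additive subgroup generated by commutators `a*b - b*a` with `a ∈ A`, `b ∈ B`. -/
def commSG (R : Type*) [NonUnitalRing R] (A B : Set R) : AddSubgroup R :=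
  AddSubgroup.closure {x | ∃ a ∈ A, ∃ b ∈ B, x = a * b - b * a}

/-- The additive subgroup generated by products `a*b` with `a ∈ A`, `b ∈ B`. -/
def prodSG (R : Type*) [NonUnitalRing R] (A B : Set R) : AddSubgroup R :=
  AddSubgroup.closure {x | ∃ a ∈ A, ∃ b ∈ B, x = a * b}

/-- `L` is a Lie ideal of `R`. -/
def IsLieIdeal (R : Type*) [NonUnitalRing R] (L : AddSubgroup R) : Prop :=
  ∀ a ∈ L, ∀ r : R, a * r - r * a ∈ L

/-- `sgPow R L n` is the additive subgroup `L^(n+1)` generated by products of `n+1`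
elements of `L`. -/
def sgPow (R : Type*) [NonUnitalRing R] (L : AddSubgroup R) : ℕ → AddSubgroup R
  | 0 => L
  | n + 1 => prodSG R (sgPow R L n) L

/-- `R` is a semiprime ring. -/
def IsSemiprimeRing (R : Type*) [NonUnitalRing R] : Prop :=
  ∀ a : R, (∀ x : R, a * x * a = 0) → a = 0

/-- `R` is a prime ring. -/
def IsPrimeRing (R : Type*) [NonUnitalRing R] : Prop :=
  ∀ a b : R, (∀ x : R, a * x * b = 0) → a = 0 ∨ b = 0

theorem mul_mul_sub_mul_mul_eq {R : Type*} [NonUnitalRing R] (s t x : R) :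
    s * t * x - x * (s * t) = (s * (t * x) - t * x * s) + (t * (x * s) - x * s * t) := by
  noncomm_ring

def commutatorsMemSubring {R : Type*} [NonUnitalRing R] (M : AddSubgroup R) :
    NonUnitalSubring R where
  carrier := {s | ∀ x, s * x - x * s ∈ M}
  zero_mem' x := by simp
  add_mem' {s t} hs ht x := by
    simpa only [add_mul, mul_add, add_sub_add_comm] using add_mem (hs x) (ht x)
  neg_mem' {s} hs x := by
    simpa only [neg_mul, mul_neg, neg_sub_neg, neg_sub] using neg_mem (hs x)
  mul_mem' {s t} hs ht x := by
    rw [mul_mul_sub_mul_mul_eq]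
    exact add_mem (hs (t * x)) (ht (x * s))

theorem commSG_univ_le_iff {R : Type*} [NonUnitalRing R] (S : Set R) (M : AddSubgroup R) :
    commSG R S Set.univ ≤ M ↔ S ⊆ commutatorsMemSubring M := by
  rw [commSG, AddSubgroup.closure_le]
  constructor
  · intro h s hs x
    exact h ⟨s, hs, x, trivial, rfl⟩
  · rintro h _ ⟨s, hs, x, -, rfl⟩
    exact h hs x

/-- For an additive subgroup A of a (not necessarily unital) ring R,
`[A, R] = [\overline A, R]` where `\overline A` is the subring generated by A. -/
theorem stmt0 (R : Type*) [NonUnitalRing R] (A : AddSubgroup R) :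
    commSG R (A : Set R) Set.univ
      = commSG R ((NonUnitalSubring.closure (A : Set R) : NonUnitalSubring R) : Set R)
          Set.univ := by
  apply le_antisymm
  · rw [commSG_univ_le_iff]
    exact NonUnitalSubring.subset_closure.trans ((commSG_univ_le_iff _ _).1 le_rfl)
  · rw [commSG_univ_le_iff, SetLike.coe_subset_coe, NonUnitalSubring.closure_le,
      ← commSG_univ_le_iff]
end

section
/- Let R be a semiprime ring and a in R. If [a, [R, R]] = 0 (i.e., a commutes with every commutator [x, y] for x, y in R), then a is in the center of R. -/
/-!
Write `[u, v] = u v - v u` and `d = [a, x]`. Since `[x, x z] = x [x, z]`, the Leibniz rule for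
`[a, -]` and the hypothesis on `a` give `d [x, z] = 0` for all `z`. Applying this to `z a` and
expanding `[x, z a] = [x, z] a + z [x, a]` yields `d z d = 0` for all `z`, so `d = 0` by
semiprimeness.
-/

section CommutatorIdentities

variable {R : Type*} [NonUnitalRing R]

theorem commutator_mul_commutator_eq_zero_of_commute_commutators {a : R}
    (ha : ∀ u v : R, a * (u * v - v * u) = (u * v - v * u) * a) (x z : R) :
    (a * x - x * a) * (x * z - z * x) = 0 := by
  linear_combination (norm := noncomm_ring) ha x (x * z) - x * ha x z

theorem mul_mul_commutator_eq_zero_of_forall_mul_commutator_eq_zero {d x : R}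
    (hd : ∀ z : R, d * (x * z - z * x) = 0) (y z : R) :
    d * z * (x * y - y * x) = 0 := by
  linear_combination (norm := noncomm_ring) hd (z * y) - hd z * y

end CommutatorIdentities

/-- in a semiprime ring, if a commutes with [R,R] then a is central. -/
theorem stmt1 (R : Type*) [NonUnitalRing R] (hR : IsSemiprimeRing R) (a : R)
    (h : ∀ c ∈ commSG R Set.univ Set.univ, a * c = c * a) :
    ∀ x : R, a * x = x * a := by
  have ha : ∀ u v : R, a * (u * v - v * u) = (u * v - v * u) * a := fun u v =>
    h _ (AddSubgroup.subset_closure ⟨u, trivial, v, trivial, rfl⟩)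
  intro x
  have hd := commutator_mul_commutator_eq_zero_of_commute_commutators ha x
  have hdzd : ∀ z : R, (a * x - x * a) * z * (a * x - x * a) = 0 := fun z => by
    linear_combination (norm := noncomm_ring)
      -mul_mul_commutator_eq_zero_of_forall_mul_commutator_eq_zero hd a z
  exact sub_eq_zero.mp (hR _ hdzd)
end

section
/- Let R be a prime ring and a, b in R. If a[b, x] lies in the center Z(R) for all x in R, then a = 0 or b is in Z(R). -/
/-!
If every `a[b,x]` vanishes, then `a x [b,y] = a[b,xy] - a[b,x]y = 0` for all `x`, so
primeness gives `a = 0` or `[b,y] = 0`. Otherwise some `z = a[b,x]` is a nonzero central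
element, and so is `zb = a[b,xb]`; then `z[b,y] = 0`, and a nonzero central element
annihilates nothing nonzero in a prime ring.
-/

namespace IsPrimeRing

variable {R : Type*} [NonUnitalRing R]

theorem eq_zero_or_eq_zero_of_central_mul_eq_zero (hR : IsPrimeRing R) {z c : R}
    (hz : ∀ w : R, z * w = w * z) (hzc : z * c = 0) : z = 0 ∨ c = 0 :=
  hR z c fun w => by rw [hz w, mul_assoc, hzc, mul_zero]

theorem eq_zero_or_central_of_mul_commutator_eq_zero (hR : IsPrimeRing R) {a b : R}
    (h : ∀ x : R, a * (b * x - x * b) = 0) : a = 0 ∨ ∀ y : R, b * y = y * b := by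
  by_cases ha : a = 0
  · exact Or.inl ha
  refine Or.inr fun y => ?_
  have hann : ∀ x : R, a * x * (b * y - y * b) = 0 := fun x => by
    calc a * x * (b * y - y * b)
        = a * (b * (x * y) - x * y * b) - a * (b * x - x * b) * y := by noncomm_ring
      _ = 0 := by rw [h, h, zero_mul, sub_zero]
  exact sub_eq_zero.mp ((hR a _ hann).resolve_left ha)

theorem central_of_central_mul_central (hR : IsPrimeRing R) {z b : R} (hz0 : z ≠ 0)
    (hz : ∀ w : R, z * w = w * z) (hzb : ∀ w : R, z * b * w = w * (z * b)) (y : R) :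
    b * y = y * b := by
  have hzc : z * (b * y - y * b) = 0 := by
    calc z * (b * y - y * b) = z * b * y - z * y * b := by noncomm_ring
      _ = 0 := by rw [hzb y, hz y, mul_assoc, sub_self]
  exact sub_eq_zero.mp ((hR.eq_zero_or_eq_zero_of_central_mul_eq_zero hz hzc).resolve_left hz0)

end IsPrimeRing

/-- in a prime ring, a[b,R] ⊆ Z(R) implies a = 0 or b ∈ Z(R). -/
theorem stmt2 (R : Type*) [NonUnitalRing R] (hR : IsPrimeRing R) (a b : R)
    (h : ∀ x y : R, (a * (b * x - x * b)) * y = y * (a * (b * x - x * b))) :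
    a = 0 ∨ ∀ x : R, b * x = x * b := by
  by_cases hzero : ∀ x : R, a * (b * x - x * b) = 0
  · exact hR.eq_zero_or_central_of_mul_commutator_eq_zero hzero
  obtain ⟨x, hx⟩ := not_forall.mp hzero
  have hzb : a * (b * x - x * b) * b = a * (b * (x * b) - x * b * b) := by noncomm_ring
  exact Or.inr (hR.central_of_central_mul_central hx (h x) (hzb ▸ h (x * b)))
end

section
/- Let R be a ring and L a Lie ideal of R. Then the ideal of R generated by [L, L^2] is contained in the additive subgroup L^2 (the additive subgroup generated by products of two elements of L). -/
section Aux

variable {R : Type*} [NonUnitalRing R] {L : AddSubgroup R}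

private lemma mulMemT {u v : R} (hu : u ∈ L) (hv : v ∈ L) :
    u * v ∈ prodSG R (L : Set R) (L : Set R) :=
  AddSubgroup.subset_closure ⟨u, hu, v, hv, rfl⟩

/-- `[L, L²] ⊆ L²`. -/
private lemma aux_L0 (hL : IsLieIdeal R L) {a t : R} (ha : a ∈ L)
    (ht : t ∈ prodSG R (L : Set R) (L : Set R)) :
    a * t - t * a ∈ prodSG R (L : Set R) (L : Set R) := by
  induction ht using AddSubgroup.closure_induction with
  | mem w hw =>
    obtain ⟨b, hb, c, hc, rfl⟩ := hw
    have key : a * (b * c) - (b * c) * a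
        = (a * b - b * a) * c + b * (a * c - c * a) := by noncomm_ring
    rw [key]
    exact add_mem (mulMemT (hL a ha b) hc) (mulMemT hb (hL a ha c))
  | zero => simpa using zero_mem (prodSG R (L : Set R) (L : Set R))
  | add p q hp hq ihp ihq =>
    have key : a * (p + q) - (p + q) * a = (a * p - p * a) + (a * q - q * a) := by noncomm_ring
    rw [key]; exact add_mem ihp ihq
  | neg p hp ihp =>
    have key : a * (-p) - (-p) * a = -(a * p - p * a) := by noncomm_ring
    rw [key]; exact neg_mem ihp

/-- `[L, L²] * R ⊆ L²`. -/
private lemma aux_L1 (hL : IsLieIdeal R L) {a t : R} (ha : a ∈ L)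
    (ht : t ∈ prodSG R (L : Set R) (L : Set R)) (y : R) :
    (a * t - t * a) * y ∈ prodSG R (L : Set R) (L : Set R) := by
  induction ht using AddSubgroup.closure_induction with
  | mem w hw =>
    obtain ⟨b, hb, c, hc, rfl⟩ := hw
    have key : (a * (b * c) - (b * c) * a) * y
        = a * (b * (c * y) - (c * y) * b)
          + a * (c * (y * b) - (y * b) * c)
          - b * (c * (a * y) - (a * y) * c)
          - (b * (a * y) - (a * y) * b) * c := by noncomm_ring
    rw [key]
    exact sub_mem (sub_mem (add_mem (mulMemT ha (hL b hb (c * y)))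
      (mulMemT ha (hL c hc (y * b)))) (mulMemT hb (hL c hc (a * y))))
      (mulMemT (hL b hb (a * y)) hc)
  | zero => simpa using zero_mem (prodSG R (L : Set R) (L : Set R))
  | add p q hp hq ihp ihq =>
    have key : (a * (p + q) - (p + q) * a) * y
        = (a * p - p * a) * y + (a * q - q * a) * y := by noncomm_ring
    rw [key]; exact add_mem ihp ihq
  | neg p hp ihp =>
    have key : (a * (-p) - (-p) * a) * y = -((a * p - p * a) * y) := by noncomm_ring
    rw [key]; exact neg_mem ihp

/-- `R * [L, L²] ⊆ L²`. -/
private lemma aux_L2 (hL : IsLieIdeal R L) {a t : R} (ha : a ∈ L)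
    (ht : t ∈ prodSG R (L : Set R) (L : Set R)) (x : R) :
    x * (a * t - t * a) ∈ prodSG R (L : Set R) (L : Set R) := by
  induction ht using AddSubgroup.closure_induction with
  | mem w hw =>
    obtain ⟨b, hb, c, hc, rfl⟩ := hw
    have key : x * (a * (b * c) - (b * c) * a)
        = (c * (x * b) - (x * b) * c) * a
          + (b * (c * x) - (c * x) * b) * a
          - (b * (x * a) - (x * a) * b) * c
          - b * (c * (x * a) - (x * a) * c) := by noncomm_ring
    rw [key]
    exact sub_mem (sub_mem (add_mem (mulMemT (hL c hc (x * b)) ha)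
      (mulMemT (hL b hb (c * x)) ha)) (mulMemT (hL b hb (x * a)) hc))
      (mulMemT hb (hL c hc (x * a)))
  | zero => simpa using zero_mem (prodSG R (L : Set R) (L : Set R))
  | add p q hp hq ihp ihq =>
    have key : x * (a * (p + q) - (p + q) * a)
        = x * (a * p - p * a) + x * (a * q - q * a) := by noncomm_ring
    rw [key]; exact add_mem ihp ihq
  | neg p hp ihp =>
    have key : x * (a * (-p) - (-p) * a) = -(x * (a * p - p * a)) := by noncomm_ring
    rw [key]; exact neg_mem ihp

/-- `R * [L, L²] * R ⊆ L²`. -/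
private lemma aux_L3 (hL : IsLieIdeal R L) {a t : R} (ha : a ∈ L)
    (ht : t ∈ prodSG R (L : Set R) (L : Set R)) (x y : R) :
    x * (a * t - t * a) * y ∈ prodSG R (L : Set R) (L : Set R) := by
  induction ht using AddSubgroup.closure_induction with
  | mem w hw =>
    obtain ⟨b, hb, c, hc, rfl⟩ := hw
    have key : x * (a * (b * c) - (b * c) * a) * y
        = a * (c * (y * x * b) - (y * x * b) * c)
          - a * (c * (x * b * y) - (x * b * y) * c)
          + a * (b * (y * c * x) - (y * c * x) * b)
          - a * (b * (x * c * y) - (x * c * y) * b)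
          + a * (b * (x * y * c) - (x * y * c) * b)
          + c * (a * (x * b * y) - (x * b * y) * a)
          + b * (c * (y * x * a) - (y * x * a) * c)
          - b * (c * (x * a * y) - (x * a * y) * c)
          + b * (a * (y * c * x) - (y * c * x) * a)
          - b * (a * (x * y * c) - (x * y * c) * a)
          - (c * (a * x * y) - (a * x * y) * c) * b
          - (a * (b * y * x) - (b * y * x) * a) * c
          - (b * (a * y * x) - (a * y * x) * b) * c
          + (b * (a * x * y) - (a * x * y) * b) * c
          - (b * (x * a * y) - (x * a * y) * b) * c
          + (c * (x * b * y) - (x * b * y) * c) * a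
          - a * ((c * y - y * c) * (x * b) - (x * b) * (c * y - y * c))
          + a * ((c * x - x * c) * (b * y) - (b * y) * (c * x - x * c))
          - b * ((c * y - y * c) * (x * a) - (x * a) * (c * y - y * c))
          + b * ((c * x - x * c) * (a * y) - (a * y) * (c * x - x * c))
          - (a * x - x * a) * (c * (y * b) - (y * b) * c)
          - (a * x - x * a) * (b * (c * y) - (c * y) * b)
          + (b * x - x * b) * (a * (y * c) - (y * c) * a)
          + (b * x - x * b) * (c * (a * y) - (a * y) * c)
          - (c * (a * x) - (a * x) * c) * (b * y - y * b)
          + (a * (b * x) - (b * x) * a) * (c * y - y * c) := by noncomm_ring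
    rw [key]
    have h1 := mulMemT ha (hL c hc (y * x * b))
    have h2 := mulMemT ha (hL c hc (x * b * y))
    have h3 := mulMemT ha (hL b hb (y * c * x))
    have h4 := mulMemT ha (hL b hb (x * c * y))
    have h5 := mulMemT ha (hL b hb (x * y * c))
    have h6 := mulMemT hc (hL a ha (x * b * y))
    have h7 := mulMemT hb (hL c hc (y * x * a))
    have h8 := mulMemT hb (hL c hc (x * a * y))
    have h9 := mulMemT hb (hL a ha (y * c * x))
    have h10 := mulMemT hb (hL a ha (x * y * c))
    have h11 := mulMemT (hL c hc (a * x * y)) hb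
    have h12 := mulMemT (hL a ha (b * y * x)) hc
    have h13 := mulMemT (hL b hb (a * y * x)) hc
    have h14 := mulMemT (hL b hb (a * x * y)) hc
    have h15 := mulMemT (hL b hb (x * a * y)) hc
    have h16 := mulMemT (hL c hc (x * b * y)) ha
    have h17 := mulMemT ha (hL _ (hL c hc y) (x * b))
    have h18 := mulMemT ha (hL _ (hL c hc x) (b * y))
    have h19 := mulMemT hb (hL _ (hL c hc y) (x * a))
    have h20 := mulMemT hb (hL _ (hL c hc x) (a * y))
    have h21 := mulMemT (hL a ha x) (hL c hc (y * b))
    have h22 := mulMemT (hL a ha x) (hL b hb (c * y))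
    have h23 := mulMemT (hL b hb x) (hL a ha (y * c))
    have h24 := mulMemT (hL b hb x) (hL c hc (a * y))
    have h25 := mulMemT (hL c hc (a * x)) (hL b hb y)
    have h26 := mulMemT (hL a ha (b * x)) (hL c hc y)
    exact add_mem (sub_mem (add_mem (add_mem (sub_mem (sub_mem (add_mem (sub_mem (add_mem (sub_mem (add_mem (sub_mem (add_mem (sub_mem (sub_mem (sub_mem (sub_mem (add_mem (sub_mem (add_mem (add_mem (add_mem (sub_mem (add_mem (sub_mem h1 h2) h3) h4) h5) h6) h7) h8) h9) h10) h11) h12) h13) h14) h15) h16) h17) h18) h19) h20) h21) h22) h23) h24) h25) h26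
  | zero => simpa using zero_mem (prodSG R (L : Set R) (L : Set R))
  | add p q hp hq ihp ihq =>
    have key : x * (a * (p + q) - (p + q) * a) * y
        = x * (a * p - p * a) * y + x * (a * q - q * a) * y := by noncomm_ring
    rw [key]; exact add_mem ihp ihq
  | neg p hp ihp =>
    have key : x * (a * (-p) - (-p) * a) * y = -(x * (a * p - p * a) * y) := by noncomm_ring
    rw [key]; exact neg_mem ihp

/-- Elements of `commSG L L²` and their one- and two-sided multiples lie in `L²`. -/
private lemma aux_C (hL : IsLieIdeal R L) {w : R}
    (hw : w ∈ commSG R (L : Set R)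
      ((prodSG R (L : Set R) (L : Set R) : AddSubgroup R) : Set R)) :
    w ∈ prodSG R (L : Set R) (L : Set R)
      ∧ (∀ y : R, w * y ∈ prodSG R (L : Set R) (L : Set R))
      ∧ (∀ x : R, x * w ∈ prodSG R (L : Set R) (L : Set R))
      ∧ (∀ x y : R, x * w * y ∈ prodSG R (L : Set R) (L : Set R)) := by
  induction hw using AddSubgroup.closure_induction with
  | mem w hw =>
    obtain ⟨a, ha, t, ht, rfl⟩ := hw
    exact ⟨aux_L0 hL ha ht, fun y => aux_L1 hL ha ht y, fun x => aux_L2 hL ha ht x,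
      fun x y => aux_L3 hL ha ht x y⟩
  | zero =>
    refine ⟨zero_mem _, fun y => ?_, fun x => ?_, fun x y => ?_⟩ <;>
      simpa using zero_mem (prodSG R (L : Set R) (L : Set R))
  | add p q hp hq ihp ihq =>
    obtain ⟨i0, i1, i2, i3⟩ := ihp
    obtain ⟨j0, j1, j2, j3⟩ := ihq
    refine ⟨add_mem i0 j0, fun y => ?_, fun x => ?_, fun x y => ?_⟩
    · have key : (p + q) * y = p * y + q * y := by noncomm_ring
      rw [key]; exact add_mem (i1 y) (j1 y)
    · have key : x * (p + q) = x * p + x * q := by noncomm_ring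
      rw [key]; exact add_mem (i2 x) (j2 x)
    · have key : x * (p + q) * y = x * p * y + x * q * y := by noncomm_ring
      rw [key]; exact add_mem (i3 x y) (j3 x y)
  | neg p hp ihp =>
    obtain ⟨i0, i1, i2, i3⟩ := ihp
    refine ⟨neg_mem i0, fun y => ?_, fun x => ?_, fun x y => ?_⟩
    · have key : (-p) * y = -(p * y) := by noncomm_ring
      rw [key]; exact neg_mem (i1 y)
    · have key : x * (-p) = -(x * p) := by noncomm_ring
      rw [key]; exact neg_mem (i2 x)
    · have key : x * (-p) * y = -(x * p * y) := by noncomm_ring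
      rw [key]; exact neg_mem (i3 x y)

end Aux

/-- the ideal generated by [L, L²] is contained in L². -/
theorem stmt3 (R : Type*) [NonUnitalRing R] (L : AddSubgroup R) (hL : IsLieIdeal R L) :
    (TwoSidedIdeal.span
        ((commSG R (L : Set R) ((prodSG R (L : Set R) (L : Set R) : AddSubgroup R) : Set R)
          : AddSubgroup R) : Set R) : Set R)
      ⊆ ((prodSG R (L : Set R) (L : Set R) : AddSubgroup R) : Set R) := by
  intro z hz
  rw [SetLike.mem_coe, TwoSidedIdeal.mem_span_iff_mem_addSubgroup_closure_nonunital] at hz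
  refine (AddSubgroup.closure_le (prodSG R (L : Set R) (L : Set R))).mpr ?_ hz
  rintro w (((hw | ⟨u, hu, r, -, rfl⟩) | ⟨r, -, u, hu, rfl⟩) |
    ⟨-, ⟨r', -, u, hu, rfl⟩, r, -, rfl⟩)
  · exact (aux_C hL hw).1
  · exact (aux_C hL hu).2.1 r
  · exact (aux_C hL hu).2.2.1 r
  · exact (aux_C hL hu).2.2.2 r' r
end

section
/- Let R be a ring and L a Lie ideal of R. Then the ideal of R generated by [L, L] is contained in L + L^2. -/
section Aux

variable {R : Type*} [NonUnitalRing R] (L : AddSubgroup R) (hL : IsLieIdeal R L)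

local notation "T" => L ⊔ prodSG R (L : Set R) (L : Set R)

lemma aux_L_le_T : ∀ x ∈ L, x ∈ T := fun x hx => (le_sup_left : L ≤ T) hx

lemma aux_prod_mem_T {a b : R} (ha : a ∈ L) (hb : b ∈ L) : a * b ∈ T :=
  (le_sup_right : prodSG R (L : Set R) (L : Set R) ≤ T)
    (AddSubgroup.subset_closure ⟨a, ha, b, hb, rfl⟩)

include hL in
/-- `[a,b] * x ∈ L + L²` for `a, b ∈ L`. -/
lemma aux_key1 {a b : R} (ha : a ∈ L) (hb : b ∈ L) (x : R) :
    (a * b - b * a) * x ∈ T := by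
  have h1 : a * (b * x) - (b * x) * a ∈ L := hL a ha (b * x)
  have h2 : x * a - a * x ∈ L := by
    have := (L.neg_mem (hL a ha x))
    simpa using this
  have heq : (a * b - b * a) * x =
      (a * (b * x) - (b * x) * a) + b * (x * a - a * x) := by noncomm_ring
  rw [heq]
  exact AddSubgroup.add_mem _ (aux_L_le_T L _ h1) (aux_prod_mem_T L hb h2)

include hL in
/-- `x * [a,b] ∈ L + L²` for `a, b ∈ L`. -/
lemma aux_key2 {a b : R} (ha : a ∈ L) (hb : b ∈ L) (x : R) :
    x * (a * b - b * a) ∈ T := by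
  have h1 : a * (x * b) - (x * b) * a ∈ L := hL a ha (x * b)
  have h2 : x * a - a * x ∈ L := by
    have := (L.neg_mem (hL a ha x))
    simpa using this
  have heq : x * (a * b - b * a) =
      (x * a - a * x) * b + (a * (x * b) - (x * b) * a) := by noncomm_ring
  rw [heq]
  exact AddSubgroup.add_mem _ (aux_prod_mem_T L h2 hb) (aux_L_le_T L _ h1)

include hL in
/-- `x * [a,b] * y ∈ L + L²` for `a, b ∈ L`. -/
lemma aux_key3 {a b : R} (ha : a ∈ L) (hb : b ∈ L) (x y : R) :
    x * (a * b - b * a) * y ∈ T := by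
  have hax : a * x - x * a ∈ L := hL a ha x
  have hbx : b * x - x * b ∈ L := hL b hb x
  have h1 : (a * b - b * a) * (x * y) ∈ T := aux_key1 L hL ha hb (x * y)
  have h2 : ((a * x - x * a) * b - b * (a * x - x * a)) * y ∈ T :=
    aux_key1 L hL hax hb y
  have h3 : (a * (b * x - x * b) - (b * x - x * b) * a) * y ∈ T :=
    aux_key1 L hL ha hbx y
  have heq : x * (a * b - b * a) * y =
      (a * b - b * a) * (x * y)
        - ((a * x - x * a) * b - b * (a * x - x * a)) * y
        - (a * (b * x - x * b) - (b * x - x * b) * a) * y := by noncomm_ring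
  rw [heq]
  exact AddSubgroup.sub_mem _ (AddSubgroup.sub_mem _ h1 h2) h3

include hL in
lemma aux_comm_all {c : R} (hc : c ∈ commSG R (L : Set R) (L : Set R)) :
    c ∈ T ∧ (∀ x : R, c * x ∈ T) ∧ (∀ x : R, x * c ∈ T) ∧
      (∀ x y : R, x * c * y ∈ T) := by
  induction hc using AddSubgroup.closure_induction with
  | mem g hg =>
    obtain ⟨a, ha, b, hb, rfl⟩ := hg
    exact ⟨aux_L_le_T L _ (hL a ha b), fun x => aux_key1 L hL ha hb x,
      fun x => aux_key2 L hL ha hb x, fun x y => aux_key3 L hL ha hb x y⟩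
  | zero =>
    refine ⟨AddSubgroup.zero_mem _, fun x => ?_, fun x => ?_, fun x y => ?_⟩
    · simpa using AddSubgroup.zero_mem T
    · simpa using AddSubgroup.zero_mem T
    · simpa using AddSubgroup.zero_mem T
  | add c d hc hd ihc ihd =>
    obtain ⟨h0c, h1c, h2c, h3c⟩ := ihc
    obtain ⟨h0d, h1d, h2d, h3d⟩ := ihd
    refine ⟨AddSubgroup.add_mem _ h0c h0d, fun x => ?_, fun x => ?_, fun x y => ?_⟩
    · rw [add_mul]; exact AddSubgroup.add_mem _ (h1c x) (h1d x)
    · rw [mul_add]; exact AddSubgroup.add_mem _ (h2c x) (h2d x)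
    · rw [mul_add, add_mul]; exact AddSubgroup.add_mem _ (h3c x y) (h3d x y)
  | neg c hc ihc =>
    obtain ⟨h0c, h1c, h2c, h3c⟩ := ihc
    refine ⟨AddSubgroup.neg_mem _ h0c, fun x => ?_, fun x => ?_, fun x y => ?_⟩
    · rw [neg_mul]; exact AddSubgroup.neg_mem _ (h1c x)
    · rw [mul_neg]; exact AddSubgroup.neg_mem _ (h2c x)
    · rw [mul_neg, neg_mul]; exact AddSubgroup.neg_mem _ (h3c x y)

end Aux

/-- the ideal generated by [L, L] is contained in L + L². -/
theorem stmt4 (R : Type*) [NonUnitalRing R] (L : AddSubgroup R) (hL : IsLieIdeal R L) :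
    (TwoSidedIdeal.span ((commSG R (L : Set R) (L : Set R) : AddSubgroup R) : Set R) : Set R)
      ⊆ ((L ⊔ prodSG R (L : Set R) (L : Set R) : AddSubgroup R) : Set R) := by
  intro z hz
  rw [SetLike.mem_coe, TwoSidedIdeal.mem_span_iff_mem_addSubgroup_closure_nonunital] at hz
  have : z ∈ (L ⊔ prodSG R (L : Set R) (L : Set R) : AddSubgroup R) := by
    induction hz using AddSubgroup.closure_induction with
    | mem g hg =>
      rcases hg with ((hg | ⟨c, hc, r, -, rfl⟩) | ⟨r, -, c, hc, rfl⟩) |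
        ⟨-, ⟨r, -, c, hc, rfl⟩, r', -, rfl⟩
      · exact (aux_comm_all L hL hg).1
      · exact (aux_comm_all L hL hc).2.1 r
      · exact (aux_comm_all L hL hc).2.2.1 r
      · exact (aux_comm_all L hL hc).2.2.2 r r'
    | zero => exact AddSubgroup.zero_mem _
    | add a b _ _ iha ihb => exact AddSubgroup.add_mem _ iha ihb
    | neg a _ iha => exact AddSubgroup.neg_mem _ iha
  exact this
end

section
/- Let R be a ring, L a Lie ideal of R, and m > 1 an integer. Then the ideal of R generated by [L^{m-1}, L^m] is contained in L^m, and the commutator of this ideal with R is contained in L^m ∩ L. -/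
section Aux

variable {R : Type*} [NonUnitalRing R] {L : AddSubgroup R}

lemma mem_sgPow_succ {n : ℕ} {p l : R} (hp : p ∈ sgPow R L n) (hl : l ∈ L) :
    p * l ∈ sgPow R L (n + 1) :=
  AddSubgroup.subset_closure ⟨p, hp, l, hl, rfl⟩

/-- `L·L^n ⊆ L^{n+1}`. -/
lemma mul_mem_sgPow_succ : ∀ n : ℕ, ∀ l ∈ L, ∀ p ∈ sgPow R L n,
    l * p ∈ sgPow R L (n + 1) := by
  intro n
  induction n with
  | zero => exact fun l hl p hp => AddSubgroup.subset_closure ⟨l, hl, p, hp, rfl⟩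
  | succ n ih =>
    intro l hl p hp
    induction hp using AddSubgroup.closure_induction with
    | mem x hx =>
      obtain ⟨q, hq, l', hl', rfl⟩ := hx
      rw [← mul_assoc]
      exact AddSubgroup.subset_closure ⟨l * q, ih l hl q hq, l', hl', rfl⟩
    | zero => simpa using (zero_mem (sgPow R L (n + 2)))
    | add x y hx hy px py => rw [mul_add]; exact add_mem px py
    | neg x hx px => rw [mul_neg]; exact neg_mem px

/-- Each `L^n` is a Lie ideal. -/
lemma sgPow_lie (hL : IsLieIdeal R L) : ∀ n : ℕ, IsLieIdeal R (sgPow R L n) := by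
  intro n
  induction n with
  | zero => exact hL
  | succ n ih =>
    intro a ha r
    induction ha using AddSubgroup.closure_induction with
    | mem x hx =>
      obtain ⟨p, hp, l, hl, rfl⟩ := hx
      have h1 : p * l * r - r * (p * l) = p * (l * r - r * l) + (p * r - r * p) * l := by
        simp only [mul_sub, sub_mul, mul_assoc]
        abel
      rw [h1]
      exact add_mem (mem_sgPow_succ hp (hL l hl r)) (mem_sgPow_succ (ih p hp r) hl)
    | zero => simpa using (zero_mem (sgPow R L (n + 1)))
    | add x y hx hy px py =>
      have h1 : (x + y) * r - r * (x + y) = (x * r - r * x) + (y * r - r * y) := by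
        simp only [add_mul, mul_add]; abel
      rw [h1]; exact add_mem px py
    | neg x hx px =>
      have h1 : (-x) * r - r * (-x) = -(x * r - r * x) := by
        simp only [neg_mul, mul_neg]; abel
      rw [h1]; exact neg_mem px

/-- `[L^n, R] ⊆ L`. -/
lemma sgPow_comm_mem (hL : IsLieIdeal R L) : ∀ n : ℕ, ∀ v ∈ sgPow R L n, ∀ r : R,
    v * r - r * v ∈ L := by
  intro n
  induction n with
  | zero => exact hL
  | succ n ih =>
    intro v hv r
    induction hv using AddSubgroup.closure_induction with
    | mem x hx =>
      obtain ⟨p, hp, l, hl, rfl⟩ := hx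
      have h1 : p * l * r - r * (p * l) =
          (p * (l * r) - (l * r) * p) + (l * (r * p) - (r * p) * l) := by
        simp only [mul_assoc]; abel
      rw [h1]
      exact add_mem (ih p hp (l * r)) (hL l hl (r * p))
    | zero => simpa using (zero_mem L)
    | add x y hx hy px py =>
      have h1 : (x + y) * r - r * (x + y) = (x * r - r * x) + (y * r - r * y) := by
        simp only [add_mul, mul_add]; abel
      rw [h1]; exact add_mem px py
    | neg x hx px =>
      have h1 : (-x) * r - r * (-x) = -(x * r - r * x) := by
        simp only [neg_mul, mul_neg]; abel
      rw [h1]; exact neg_mem px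

/-- Key lemma: `R·[L^n, L^{n+1}] ⊆ L^{n+1}`, via `r[u,v] = [v,r]u - [v,ru]`. -/
lemma key (hL : IsLieIdeal R L) {n : ℕ} {u v : R} (hu : u ∈ sgPow R L n)
    (hv : v ∈ sgPow R L (n + 1)) (r : R) :
    r * (u * v - v * u) ∈ sgPow R L (n + 1) := by
  have h1 : r * (u * v - v * u) = (v * r - r * v) * u - (v * (r * u) - (r * u) * v) := by
    simp only [mul_sub, sub_mul, mul_assoc]
    abel
  rw [h1]
  exact sub_mem (mul_mem_sgPow_succ n _ (sgPow_comm_mem hL (n + 1) v hv r) u hu)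
    (sgPow_lie hL (n + 1) v hv (r * u))

end Aux

/-- for m > 1, the ideal generated by [L^{m-1}, L^m] is contained in L^m,
and its commutator with R is contained in L^m ∩ L. -/
theorem stmt5 (R : Type*) [NonUnitalRing R] (L : AddSubgroup R) (hL : IsLieIdeal R L)
    (m : ℕ) (hm : 1 < m) :
    (TwoSidedIdeal.span
        ((commSG R ((sgPow R L (m - 2) : AddSubgroup R) : Set R)
            ((sgPow R L (m - 1) : AddSubgroup R) : Set R) : AddSubgroup R) : Set R) : Set R)
        ⊆ ((sgPow R L (m - 1) : AddSubgroup R) : Set R) ∧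
    ((commSG R
        (TwoSidedIdeal.span
          ((commSG R ((sgPow R L (m - 2) : AddSubgroup R) : Set R)
              ((sgPow R L (m - 1) : AddSubgroup R) : Set R) : AddSubgroup R) : Set R) : Set R)
        Set.univ : AddSubgroup R) : Set R)
      ⊆ ((sgPow R L (m - 1) ⊓ L : AddSubgroup R) : Set R) := by
  obtain ⟨k, rfl⟩ : ∃ k, m = k + 2 := ⟨m - 2, by omega⟩
  have e2 : k + 2 - 2 = k := rfl
  have e1 : k + 2 - 1 = k + 1 := rfl
  rw [e1, e2]
  set U := sgPow R L k with hU
  set V := sgPow R L (k + 1) with hV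
  -- the auxiliary two-sided ideal
  set carr : Set R := {x | x ∈ V ∧ (∀ r : R, r * x ∈ V) ∧ (∀ r : R, x * r ∈ V) ∧
      (∀ r s : R, r * x * s ∈ V)} with hcarr
  have hzero : (0 : R) ∈ carr := by
    refine ⟨zero_mem V, fun r => ?_, fun r => ?_, fun r s => ?_⟩ <;>
      simp [zero_mem V]
  have hadd : ∀ {x y : R}, x ∈ carr → y ∈ carr → x + y ∈ carr := by
    rintro x y ⟨h1, h2, h3, h4⟩ ⟨g1, g2, g3, g4⟩
    refine ⟨add_mem h1 g1, fun r => ?_, fun r => ?_, fun r s => ?_⟩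
    · rw [mul_add]; exact add_mem (h2 r) (g2 r)
    · rw [add_mul]; exact add_mem (h3 r) (g3 r)
    · rw [mul_add, add_mul]; exact add_mem (h4 r s) (g4 r s)
  have hneg : ∀ {x : R}, x ∈ carr → -x ∈ carr := by
    rintro x ⟨h1, h2, h3, h4⟩
    refine ⟨neg_mem h1, fun r => ?_, fun r => ?_, fun r s => ?_⟩
    · rw [mul_neg]; exact neg_mem (h2 r)
    · rw [neg_mul]; exact neg_mem (h3 r)
    · rw [mul_neg, neg_mul]; exact neg_mem (h4 r s)
  have hmulleft : ∀ {x y : R}, y ∈ carr → x * y ∈ carr := by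
    rintro x y ⟨h1, h2, h3, h4⟩
    refine ⟨h2 x, fun r => ?_, fun r => ?_, fun r s => ?_⟩
    · rw [← mul_assoc]; exact h2 (r * x)
    · exact h4 x r
    · rw [← mul_assoc]; exact h4 (r * x) s
  have hmulright : ∀ {x y : R}, x ∈ carr → x * y ∈ carr := by
    rintro x y ⟨h1, h2, h3, h4⟩
    refine ⟨h3 y, fun r => ?_, fun r => ?_, fun r s => ?_⟩
    · rw [← mul_assoc]; exact h4 r y
    · rw [mul_assoc]; exact h3 (y * r)
    · have : r * (x * y) * s = r * x * (y * s) := by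
        simp only [mul_assoc]
      rw [this]; exact h4 r (y * s)
  set I : TwoSidedIdeal R := TwoSidedIdeal.mk' carr hzero hadd hneg hmulleft hmulright with hI
  have memI : ∀ x : R, x ∈ I ↔ x ∈ carr := fun x =>
    TwoSidedIdeal.mem_mk' carr hzero hadd hneg hmulleft hmulright x
  -- generators of commSG U V lie in carr
  have hgen : ∀ c ∈ {x : R | ∃ a ∈ (U : Set R), ∃ b ∈ (V : Set R), x = a * b - b * a},
      c ∈ carr := by
    rintro c ⟨u, hu, v, hv, rfl⟩
    have hc1 : u * v - v * u ∈ V := by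
      have h := sgPow_lie hL (k + 1) v hv u
      have e : u * v - v * u = -(v * u - u * v) := by abel
      rw [e]; exact neg_mem h
    have hc2 : ∀ r : R, r * (u * v - v * u) ∈ V := fun r => key hL hu hv r
    have hc3 : ∀ r : R, (u * v - v * u) * r ∈ V := by
      intro r
      have e : (u * v - v * u) * r =
          r * (u * v - v * u) + ((u * v - v * u) * r - r * (u * v - v * u)) := by abel
      rw [e]
      exact add_mem (hc2 r) (sgPow_lie hL (k + 1) _ hc1 r)
    refine ⟨hc1, hc2, hc3, fun r s => ?_⟩
    have jac : (u * v - v * u) * s - s * (u * v - v * u) =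
        ((u * s - s * u) * v - v * (u * s - s * u)) +
          (u * (v * s - s * v) - (v * s - s * v) * u) := by
      simp only [mul_sub, sub_mul, mul_assoc]
      abel
    have h5 : r * ((u * v - v * u) * s - s * (u * v - v * u)) ∈ V := by
      rw [jac, mul_add]
      exact add_mem (key hL (sgPow_lie hL k u hu s) hv r)
        (key hL hu (sgPow_lie hL (k + 1) v hv s) r)
    have e : r * (u * v - v * u) * s =
        r * s * (u * v - v * u) + r * ((u * v - v * u) * s - s * (u * v - v * u)) := by
      simp only [mul_sub, sub_mul, mul_assoc]
      abel
    rw [e]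
    exact add_mem (hc2 (r * s)) h5
  -- commSG U V ⊆ I
  have hCI : ((commSG R (U : Set R) (V : Set R) : AddSubgroup R) : Set R) ⊆ (I : Set R) := by
    intro x hx
    rw [SetLike.mem_coe, memI]
    induction hx using AddSubgroup.closure_induction with
    | mem y hy => exact hgen y hy
    | zero => exact hzero
    | add a b ha hb pa pb => exact hadd pa pb
    | neg a ha pa => exact hneg pa
  -- part 1
  have part1 : (TwoSidedIdeal.span
      ((commSG R (U : Set R) (V : Set R) : AddSubgroup R) : Set R) : Set R) ⊆ (V : Set R) := by
    intro x hx
    rw [SetLike.mem_coe, TwoSidedIdeal.mem_span_iff] at hx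
    have hxI : x ∈ I := hx I hCI
    rw [memI] at hxI
    exact hxI.1
  refine ⟨part1, ?_⟩
  -- part 2
  intro x hx
  rw [SetLike.mem_coe] at hx
  have : x ∈ V ⊓ L := by
    induction hx using AddSubgroup.closure_induction with
    | mem y hy =>
      obtain ⟨t, ht, b, -, rfl⟩ := hy
      have htV : t ∈ V := part1 ht
      exact ⟨sgPow_lie hL (k + 1) t htV b, sgPow_comm_mem hL (k + 1) t htV b⟩
    | zero => exact zero_mem _
    | add a b ha hb pa pb => exact add_mem pa pb
    | neg a ha pa => exact neg_mem pa
  exact this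
end

section
/- Let R be a semiprime ring, L a Lie ideal of R, and m a positive integer. If L^m is contained in the center Z(R), then L ⊆ Z(R). -/
/-!
Write `Z` for the center. Two facts drive the proof. First, a Lie ideal `N` with `N·N ⊆ Z`
is central: for `a ∈ N` one gets `a³ ∈ Z`, then `a [a, x] = 0`, and finally the commutator
`c = [a, x]` satisfies `c² = 0`, which forces `c r c = 0` for all `r`. Second, if `L^k ⊆ Z`
then `L^(k+1) ⊆ Z`; this is the delicate step, where the semiprime hypothesis is used through
`(AP) r (AP) = 0` for a linearised identity `AP = BE` with `B` central and `BP = 0`.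
The second fact pushes `L^m ⊆ Z` up to every `L^j` with `j ≥ m`; the first, applied to the
Lie ideal `N = L^k` with `N·N ⊆ L^(2k)`, then brings it down one power at a time to `L`.
-/

open NonUnitalSubring

section Semiprime

variable {R : Type*} [NonUnitalRing R]

theorem mul_comm_of_mem_center {z : R} (hz : z ∈ center R) (y : R) : z * y = y * z :=
  (mem_center_iff.mp hz y).symm

theorem eq_zero_of_mem_center_of_mul_self_eq_zero (hR : IsSemiprimeRing R) {z : R}
    (hz : z ∈ center R) (h : z * z = 0) : z = 0 :=
  hR z fun x => by rw [mul_comm_of_mem_center hz x, mul_assoc, h, mul_zero]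

theorem mem_center_of_forall_commutator_mem_center (hR : IsSemiprimeRing R) {b : R}
    (h : ∀ x, b * x - x * b ∈ center R) : b ∈ center R := by
  refine mem_center_iff.mpr fun x => (sub_eq_zero.mp ?_).symm
  have htb : (b * x - x * b) * b ∈ center R := by
    simpa only [show b * (x * b) - x * b * b = (b * x - x * b) * b by noncomm_ring] using h (x * b)
  refine eq_zero_of_mem_center_of_mul_self_eq_zero hR (h x) ?_
  calc (b * x - x * b) * (b * x - x * b)
      = (b * x - x * b) * b * x - (b * x - x * b) * x * b := by noncomm_ring
    _ = x * ((b * x - x * b) * b) - x * (b * x - x * b) * b := by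
      rw [mul_comm_of_mem_center htb x, mul_comm_of_mem_center (h x) x]
    _ = 0 := by noncomm_ring

theorem mul_comm_of_mul_mem_center (hR : IsSemiprimeRing R) {s b : R}
    (hsb : s * b ∈ center R) (hbs : b * s ∈ center R) : s * b = b * s := by
  refine sub_eq_zero.mp (eq_zero_of_mem_center_of_mul_self_eq_zero hR (sub_mem hsb hbs) ?_)
  calc (s * b - b * s) * (s * b - b * s)
      = (b * (s * b) - s * b * b) * s - (b * s * s - s * (b * s)) * b := by noncomm_ring
    _ = 0 := by
      rw [mul_comm_of_mem_center hsb b, mul_comm_of_mem_center hbs s, sub_self, sub_self,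
        zero_mul, zero_mul, sub_zero]

theorem mul_mem_center_iff_of_mem_center {w c : R} (hw : w ∈ center R) :
    w * c ∈ center R ↔ ∀ y, w * (c * y - y * c) = 0 := by
  have e : ∀ y, w * (c * y - y * c) = w * c * y - y * (w * c) := fun y => by
    rw [mul_sub, ← mul_assoc, ← mul_assoc, mul_comm_of_mem_center hw y, mul_assoc y]
  simp only [e, sub_eq_zero]
  exact ⟨fun h y => mul_comm_of_mem_center h y, fun h => mem_center_iff.mpr fun y => (h y).symm⟩

theorem mul_eq_zero_of_mul_eq_mul_of_mem_center (hR : IsSemiprimeRing R) {A B P E : R}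
    (hB : B ∈ center R) (hBP : B * P = 0) (h : A * P = B * E) : A * P = 0 :=
  hR _ fun t => calc
    A * P * t * (A * P) = A * P * (t * B) * E := by rw [h]; noncomm_ring
    _ = A * (B * P) * t * E := by
      rw [← mul_comm_of_mem_center hB t, mul_comm_of_mem_center hB P]; noncomm_ring
    _ = 0 := by rw [hBP, mul_zero, zero_mul, zero_mul]

end Semiprime

section LieIdeal

variable {R : Type*} [NonUnitalRing R] {L : AddSubgroup R}

theorem commutator_mul_eq_neg {s c : R} (hsc : s * c ∈ center R) (y : R) :
    (s * y - y * s) * c = -(s * (c * y - y * c)) := by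
  have e : y * s * c = s * c * y := by rw [mul_assoc, mul_comm_of_mem_center hsc]
  rw [sub_mul, e]; noncomm_ring

theorem mul_commutator_eq_neg {s c : R} (hcs : c * s ∈ center R) (y : R) :
    c * (s * y - y * s) = -((c * y - y * c) * s) := by
  have e : c * (s * y) = y * (c * s) := by rw [← mul_assoc, mul_comm_of_mem_center hcs]
  rw [mul_sub, e]; noncomm_ring

theorem commutator_mul_mem_center (hL : IsLieIdeal R L) {s : R}
    (hs : ∀ c ∈ L, s * c ∈ center R) (y : R) {c : R} (hc : c ∈ L) :
    (s * y - y * s) * c ∈ center R := by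
  rw [commutator_mul_eq_neg (hs c hc)]
  exact neg_mem (hs _ (hL c hc y))

theorem mul_commutator_mem_center (hL : IsLieIdeal R L) {s : R}
    (hs : ∀ c ∈ L, c * s ∈ center R) (y : R) {c : R} (hc : c ∈ L) :
    c * (s * y - y * s) ∈ center R := by
  rw [mul_commutator_eq_neg (hs c hc)]
  exact neg_mem (hs _ (hL c hc y))

theorem mul_mul_mem_center_of_mul_mem_center (hR : IsSemiprimeRing R) {d a b : R}
    (hd : ∀ c ∈ L, d * c ∈ center R) (hd2 : ∀ c ∈ L, d * c * c ∈ center R)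
    (ha : a ∈ L) (hb : b ∈ L) : d * a * b ∈ center R := by
  have hkill : ∀ c ∈ L, ∀ y, d * c * (c * y - y * c) = 0 := fun c hc =>
    (mul_mem_center_iff_of_mem_center (hd c hc)).mp (hd2 c hc)
  have hlin : ∀ y, d * a * (b * y - y * b) = d * b * -(a * y - y * a) := fun y => by
    have h := hkill (a + b) (L.add_mem ha hb) y
    rw [show d * (a + b) * ((a + b) * y - y * (a + b)) = d * a * (a * y - y * a)
        + d * a * (b * y - y * b) + d * b * (a * y - y * a) + d * b * (b * y - y * b) by
        noncomm_ring, hkill a ha y, hkill b hb y, zero_add, add_zero] at h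
    rw [mul_neg]
    exact eq_neg_of_add_eq_zero_left h
  exact (mul_mem_center_iff_of_mem_center (hd a ha)).mpr fun y =>
    mul_eq_zero_of_mul_eq_mul_of_mem_center hR (hd b hb) (hkill b hb y) (hlin y)

theorem mul_mul_mem_center (hR : IsSemiprimeRing R) (hL : IsLieIdeal R L) {s a b : R}
    (hs : ∀ c ∈ L, s * c ∈ center R) (hs' : ∀ c ∈ L, c * s ∈ center R)
    (ha : a ∈ L) (hb : b ∈ L) : s * a * b ∈ center R := by
  have hsc : ∀ c ∈ L, s * c = c * s := fun c hc =>
    mul_comm_of_mul_mem_center hR (hs c hc) (hs' c hc)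
  refine mem_center_of_forall_commutator_mem_center hR fun x => ?_
  have hd2 : ∀ c ∈ L, (s * x - x * s) * c * c ∈ center R := fun c hc => by
    have e : s * (x * c) - x * c * s = (s * x - x * s) * c := by
      rw [mul_assoc x c s, ← hsc c hc]; noncomm_ring
    simpa only [e] using commutator_mul_mem_center hL hs (x * c) hc
  have hda : (s * x - x * s) * a = a * (s * x - x * s) := mul_comm_of_mul_mem_center hR
    (commutator_mul_mem_center hL hs x ha) (mul_commutator_mem_center hL hs' x ha)
  have e : s * a * b * x - x * (s * a * b) = -((s * x - x * s) * a * b) := calc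
    s * a * b * x - x * (s * a * b) = s * a * b * x - x * (s * a) * b := by noncomm_ring
    _ = a * s * (b * x - x * b) := by
      rw [← mul_comm_of_mem_center (hs a ha) x, ← hsc a ha]; noncomm_ring
    _ = a * -((s * x - x * s) * b) := by
      rw [commutator_mul_eq_neg (hs b hb), neg_neg, mul_assoc]
    _ = -((s * x - x * s) * a * b) := by rw [hda]; noncomm_ring
  rw [e]
  exact neg_mem (mul_mul_mem_center_of_mul_mem_center hR
    (fun c hc => commutator_mul_mem_center hL hs x hc) hd2 ha hb)

theorem commutator_mul_eq_neg_of_mul_self_mem_center {a : R} (ha : a * a ∈ center R) (y : R) :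
    (a * y - y * a) * a = -(a * (a * y - y * a)) := by
  refine eq_neg_of_add_eq_zero_left ?_
  calc (a * y - y * a) * a + a * (a * y - y * a) = a * a * y - y * (a * a) := by noncomm_ring
    _ = 0 := by rw [mul_comm_of_mem_center ha, sub_self]

end LieIdeal

namespace IsLieIdeal

variable {R : Type*} [NonUnitalRing R] {N : AddSubgroup R}

theorem eq_zero_of_mul_self_eq_zero (hN : IsLieIdeal R N) (hR : IsSemiprimeRing R)
    (hNN : ∀ p ∈ N, ∀ q ∈ N, p * q ∈ center R) {c : R} (hc : c ∈ N) (hcc : c * c = 0) :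
    c = 0 := by
  refine hR c fun y => eq_zero_of_mem_center_of_mul_self_eq_zero hR ?_ ?_
  · have h := hNN c hc _ (hN c hc y)
    rwa [mul_sub, ← mul_assoc, hcc, zero_mul, zero_sub, neg_mem_iff, ← mul_assoc] at h
  · calc c * y * c * (c * y * c) = c * y * (c * c) * y * c := by noncomm_ring
      _ = 0 := by rw [hcc, mul_zero, zero_mul, zero_mul]

theorem mul_self_mul_commutator_eq_zero (hN : IsLieIdeal R N) (hR : IsSemiprimeRing R)
    (hNN : ∀ p ∈ N, ∀ q ∈ N, p * q ∈ center R) {a : R} (ha : a ∈ N) (y : R) :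
    a * a * (a * y - y * a) = 0 := by
  have haa := hNN a ha a ha
  have hcube : ∀ y, a * a * a * y - y * (a * a * a) = a * a * (a * y - y * a) := fun y => by
    rw [← mul_assoc y, ← mul_comm_of_mem_center haa y]; noncomm_ring
  have hcube_mem : ∀ y, a * a * (a * y - y * a) ∈ center R := fun y => by
    have h := hNN a ha _ (hN a ha (y * a))
    rwa [show a * (y * a) - y * a * a = (a * y - y * a) * a by noncomm_ring,
      commutator_mul_eq_neg_of_mul_self_mem_center haa, mul_neg, ← mul_assoc,
      neg_mem_iff] at h
  have ha3 : a * a * a ∈ center R :=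
    mem_center_of_forall_commutator_mem_center hR fun y => hcube y ▸ hcube_mem y
  rw [← hcube, mul_comm_of_mem_center ha3, sub_self]

theorem mem_center_of_mul_mem_center (hN : IsLieIdeal R N) (hR : IsSemiprimeRing R)
    (hNN : ∀ p ∈ N, ∀ q ∈ N, p * q ∈ center R) {a : R} (ha : a ∈ N) :
    a ∈ center R := by
  refine mem_center_iff.mpr fun x => (sub_eq_zero.mp ?_).symm
  have hcube := hN.mul_self_mul_commutator_eq_zero hR hNN ha x
  have hanti := commutator_mul_eq_neg_of_mul_self_mem_center (hNN a ha a ha) x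
  have hcN : a * x - x * a ∈ N := hN a ha x
  set c := a * x - x * a with hc
  have hac : a * c = 0 := eq_zero_of_mem_center_of_mul_self_eq_zero hR (hNN a ha c hcN) <| calc
    a * c * (a * c) = a * (c * a) * c := by noncomm_ring
    _ = -(a * a * c * c) := by rw [hanti]; noncomm_ring
    _ = 0 := by rw [hcube, zero_mul, neg_zero]
  have hca : c * a = 0 := by rw [hanti, hac, neg_zero]
  refine hN.eq_zero_of_mul_self_eq_zero hR hNN hcN <|
    eq_zero_of_mem_center_of_mul_self_eq_zero hR (hNN c hcN c hcN) ?_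
  calc c * c * (c * c) = c * c * (a * x * c - x * (a * c)) := by rw [hc]; noncomm_ring
    _ = c * (c * a) * x * c := by rw [hac, mul_zero, sub_zero]; noncomm_ring
    _ = 0 := by rw [hca, mul_zero, zero_mul, zero_mul]

end IsLieIdeal

section Powers

variable {R : Type*} [NonUnitalRing R] {L : AddSubgroup R}

theorem prodSG_le {A B : Set R} {K : AddSubgroup R} (h : ∀ a ∈ A, ∀ b ∈ B, a * b ∈ K) :
    prodSG R A B ≤ K :=
  (AddSubgroup.closure_le K).mpr fun _ ⟨a, ha, b, hb, e⟩ => e ▸ h a ha b hb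

theorem mul_mem_sgPow_succ_s8 {k : ℕ} {s b : R} (hs : s ∈ sgPow R L k) (hb : b ∈ L) :
    s * b ∈ sgPow R L (k + 1) :=
  AddSubgroup.subset_closure ⟨s, hs, b, hb, rfl⟩

theorem mul_mem_sgPow {j : ℕ} {p : R} (hp : p ∈ sgPow R L j) :
    ∀ {k : ℕ} {q : R}, q ∈ sgPow R L k → p * q ∈ sgPow R L (j + k + 1)
  | 0, _, hq => mul_mem_sgPow_succ_s8 hp hq
  | k + 1, _, hq => by
    refine prodSG_le (K := (sgPow R L (j + (k + 1) + 1)).comap (AddMonoidHom.mulLeft p))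
      (fun u hu c hc => ?_) hq
    show p * (u * c) ∈ sgPow R L (j + (k + 1) + 1)
    rw [← mul_assoc]
    exact mul_mem_sgPow_succ_s8 (mul_mem_sgPow hp hu) hc

theorem isLieIdeal_sgPow (hL : IsLieIdeal R L) : ∀ k, IsLieIdeal R (sgPow R L k)
  | 0 => hL
  | k + 1 => fun t ht x => by
    refine prodSG_le (K := (sgPow R L (k + 1)).comap
      (AddMonoidHom.mulRight x - AddMonoidHom.mulLeft x)) (fun u hu c hc => ?_) ht
    show u * c * x - x * (u * c) ∈ sgPow R L (k + 1)
    rw [show u * c * x - x * (u * c) = u * (c * x - x * c) + (u * x - x * u) * c by noncomm_ring]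
    exact add_mem (mul_mem_sgPow_succ_s8 hu (hL c hc x))
      (mul_mem_sgPow_succ_s8 (isLieIdeal_sgPow hL k u hu x) hc)

theorem sgPow_succ_le_center (hR : IsSemiprimeRing R) (hL : IsLieIdeal R L) :
    ∀ {k : ℕ}, sgPow R L k ≤ (center R).toAddSubgroup →
      sgPow R L (k + 1) ≤ (center R).toAddSubgroup
  | 0, hk => prodSG_le fun a ha b hb => Set.mul_mem_center (hk ha) (hk hb)
  | k + 1, hk => prodSG_le fun t ht b hb => by
    refine prodSG_le (K := (center R).toAddSubgroup.comap (AddMonoidHom.mulRight b))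
      (fun s hs a ha => ?_) ht
    refine mul_mul_mem_center hR hL (fun c hc => hk (mul_mem_sgPow_succ_s8 hs hc))
      (fun c hc => hk ?_) ha hb
    simpa only [zero_add] using mul_mem_sgPow (j := 0) hc hs

theorem sgPow_le_center_of_forall_lt (hR : IsSemiprimeRing R) (hL : IsLieIdeal R L) {k : ℕ}
    (h : ∀ j, k < j → sgPow R L j ≤ (center R).toAddSubgroup) :
    sgPow R L k ≤ (center R).toAddSubgroup := fun _ ht =>
  (isLieIdeal_sgPow hL k).mem_center_of_mul_mem_center hR
    (fun _ hp _ hq => h _ (by omega) (mul_mem_sgPow hp hq)) ht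

theorem sgPow_le_center (hR : IsSemiprimeRing R) (hL : IsLieIdeal R L) {n : ℕ}
    (hn : sgPow R L n ≤ (center R).toAddSubgroup) (k : ℕ) :
    sgPow R L k ≤ (center R).toAddSubgroup := by
  have hup : ∀ j, n ≤ j → sgPow R L j ≤ (center R).toAddSubgroup := fun j hj =>
    Nat.le_induction hn (fun _ _ => sgPow_succ_le_center hR hL) j hj
  have hdown : ∀ j, 0 ≤ j → sgPow R L j ≤ (center R).toAddSubgroup :=
    Nat.decreasingInduction
      (motive := fun i _ => ∀ j, i ≤ j → sgPow R L j ≤ (center R).toAddSubgroup)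
      (fun i _ ih j hj => hj.eq_or_lt.elim
        (fun e => e ▸ sgPow_le_center_of_forall_lt hR hL ih) (ih j)) hup (Nat.zero_le n)
  exact hdown k (Nat.zero_le k)

end Powers

theorem stmt8_general (R : Type*) [NonUnitalRing R] (hR : IsSemiprimeRing R)
    (L : AddSubgroup R) (hL : IsLieIdeal R L) (m : ℕ)
    (h : ∀ x ∈ sgPow R L (m - 1), ∀ y : R, x * y = y * x) :
    ∀ x ∈ L, ∀ y : R, x * y = y * x := by
  have hm : sgPow R L (m - 1) ≤ (center R).toAddSubgroup := fun x hx =>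
    mem_center_iff.mpr fun y => (h x hx y).symm
  exact fun x hx => mul_comm_of_mem_center (sgPow_le_center hR hL hm 0 hx)

/-- in a semiprime ring, if L^m ⊆ Z(R) then L ⊆ Z(R). -/
theorem stmt8 (R : Type*) [NonUnitalRing R] (hR : IsSemiprimeRing R)
    (L : AddSubgroup R) (hL : IsLieIdeal R L) (m : ℕ) (hm : 1 ≤ m)
    (h : ∀ x ∈ sgPow R L (m - 1), ∀ y : R, x * y = y * x) :
    ∀ x ∈ L, ∀ y : R, x * y = y * x :=
  stmt8_general R hR L hL m h
end

section
/- Let R be a semiprime ring and m, n positive integers. If [[R,R]^m, [R,R]^n] = 0, then R is commutative. -/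
/-- `commPow R k` is `[R,R]^(k+1)`. -/
abbrev commPow (R : Type*) [NonUnitalRing R] (k : ℕ) : AddSubgroup R :=
  sgPow R (commSG R Set.univ Set.univ) k

section

variable {R : Type*} [NonUnitalRing R]

theorem apply_mem_of_mem_closure {G H : Type*} [AddGroup G] [AddGroup H] (f : G →+ H)
    {S : Set G} {T : AddSubgroup H} (h : ∀ s ∈ S, f s ∈ T) {x : G}
    (hx : x ∈ AddSubgroup.closure S) : f x ∈ T :=
  (AddSubgroup.closure_le (T.comap f)).2 h hx

theorem lie_mem_commPow_zero (x y : R) : ⁅x, y⁆ ∈ commPow R 0 :=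
  AddSubgroup.subset_closure ⟨x, Set.mem_univ x, y, Set.mem_univ y, Ring.lie_def x y⟩

theorem mul_mem_commPow {i : ℕ} {x : R} (hx : x ∈ commPow R i) :
    ∀ {j : ℕ} {y : R}, y ∈ commPow R j → x * y ∈ commPow R (i + j + 1)
  | 0, y, hy => AddSubgroup.subset_closure ⟨x, hx, y, hy, rfl⟩
  | j + 1, _, hy => by
    refine apply_mem_of_mem_closure (AddMonoidHom.mulLeft x) ?_ hy
    rintro _ ⟨u, hu, c, hc, rfl⟩
    show x * (u * c) ∈ _
    rw [← mul_assoc]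
    exact AddSubgroup.subset_closure ⟨x * u, mul_mem_commPow hx hu, c, hc, rfl⟩

theorem mul_mem_commPow_succ {k : ℕ} {d s : R} (hd : d ∈ commPow R 0) (hs : s ∈ commPow R k) :
    d * s ∈ commPow R (k + 1) := by
  simpa only [zero_add] using mul_mem_commPow hd hs

theorem lie_mem_commPow {k : ℕ} {x : R} (hx : x ∈ commPow R k) (r : R) : ⁅x, r⁆ ∈ commPow R k := by
  induction k generalizing x with
  | zero => exact lie_mem_commPow_zero x r
  | succ k ih =>
    refine apply_mem_of_mem_closure (AddMonoidHom.mulRight r - AddMonoidHom.mulLeft r) ?_ hx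
    rintro _ ⟨u, hu, c, hc, rfl⟩
    have expand : u * c * r - r * (u * c) = u * ⁅c, r⁆ + ⁅u, r⁆ * c := by
      noncomm_ring [Ring.lie_def]
    show u * c * r - r * (u * c) ∈ _
    rw [expand]
    exact add_mem (AddSubgroup.subset_closure ⟨u, hu, _, lie_mem_commPow_zero c r, rfl⟩)
      (AddSubgroup.subset_closure ⟨_, ih hu, c, hc, rfl⟩)

theorem commPow_le_prodSG (i : ℕ) :
    ∀ j : ℕ, commPow R (i + j + 1) ≤ prodSG R (commPow R i) (commPow R j)
  | 0 => le_rfl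
  | j + 1 => by
    refine (AddSubgroup.closure_le _).2 ?_
    rintro _ ⟨u, hu, c, hc, rfl⟩
    refine apply_mem_of_mem_closure (AddMonoidHom.mulRight c) ?_ (commPow_le_prodSG i j hu)
    rintro _ ⟨v, hv, w, hw, rfl⟩
    show v * w * c ∈ _
    rw [mul_assoc]
    exact AddSubgroup.subset_closure
      ⟨v, hv, w * c, AddSubgroup.subset_closure ⟨w, hw, c, hc, rfl⟩, rfl⟩

theorem commPow_subset_of_subset {S : NonUnitalSubring R} {m : ℕ}
    (h : (commPow R m : Set R) ⊆ S) : ∀ k : ℕ, (commPow R (k * (m + 1) + m) : Set R) ⊆ S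
  | 0 => by simpa using h
  | k + 1 => by
    rw [show (k + 1) * (m + 1) + m = k * (m + 1) + m + m + 1 by ring]
    intro x hx
    refine (AddSubgroup.closure_le S.toAddSubgroup).2 ?_ (commPow_le_prodSG _ _ hx)
    rintro _ ⟨u, hu, c, hc, rfl⟩
    exact S.mul_mem (commPow_subset_of_subset h k hu) (h hc)

theorem commute_of_mem_commPow {m n : ℕ}
    (h : ∀ x ∈ commPow R m, ∀ y ∈ commPow R n, x * y = y * x) (k l : ℕ) :
    ∀ x ∈ commPow R (k * (m + 1) + m), ∀ y ∈ commPow R (l * (n + 1) + n), x * y = y * x := by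
  have hm : (commPow R m : Set R) ⊆ (NonUnitalSubring.centralizer (commPow R n : Set R) : Set R) :=
    fun x hx => NonUnitalSubring.mem_centralizer_iff.2 fun y hy => (h x hx y hy).symm
  have hn : (commPow R n : Set R) ⊆
      (NonUnitalSubring.centralizer (commPow R (k * (m + 1) + m) : Set R) : Set R) :=
    fun y hy => NonUnitalSubring.mem_centralizer_iff.2 fun x hx =>
      (NonUnitalSubring.mem_centralizer_iff.1 (commPow_subset_of_subset hm k hx) y hy).symm
  exact fun x hx y hy =>
    NonUnitalSubring.mem_centralizer_iff.1 (commPow_subset_of_subset hn l hy) x hx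

theorem lie_mul_mul_eq_zero {b X : R} (h : ∀ u : R, ⁅b, u⁆ * X = 0) (u y : R) :
    ⁅b, u⁆ * y * X = 0 :=
  calc ⁅b, u⁆ * y * X = ⁅b, u * y⁆ * X - u * (⁅b, y⁆ * X) := by noncomm_ring [Ring.lie_def]
    _ = 0 := by rw [h, h, mul_zero, sub_zero]

theorem mul_mul_lie_eq_zero {b X : R} (h : ∀ v : R, X * ⁅v, b⁆ = 0) (v y : R) :
    X * v * ⁅y, b⁆ = 0 :=
  calc X * v * ⁅y, b⁆ = X * ⁅v * y, b⁆ - X * ⁅v, b⁆ * y := by noncomm_ring [Ring.lie_def]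
    _ = 0 := by rw [h, h, zero_mul, sub_zero]

/-- The products `a x₁ a x₂ ⋯ xₖ a`. -/
def altProducts (a : R) : ℕ → Set R
  | 0 => {a}
  | k + 1 => {w | ∃ x, ∃ t ∈ altProducts a k, w = a * x * t}

theorem mul_mul_mem_altProducts {a : R} :
    ∀ {k : ℕ} {t : R}, t ∈ altProducts a k → ∀ x, t * x * a ∈ altProducts a (k + 1)
  | 0, _, rfl, x => ⟨x, a, rfl, rfl⟩
  | _ + 1, _, ⟨y, t, ht, rfl⟩, x =>
    ⟨y, t * x * a, mul_mul_mem_altProducts ht x, by simp only [mul_assoc]⟩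

theorem altProducts_subset_zero_of_succ (hR : IsSemiprimeRing R) {a : R} {k : ℕ}
    (h : altProducts a (k + 1) ⊆ {0}) : altProducts a k ⊆ {0} := by
  intro w hw
  refine hR w fun x => ?_
  have hwxa : w * x * a = 0 := h (mul_mul_mem_altProducts hw x)
  cases k with
  | zero =>
    obtain rfl : w = a := hw
    exact hwxa
  | succ k =>
    obtain ⟨y, t, -, rfl⟩ := hw
    calc a * y * t * x * (a * y * t) = a * y * t * x * a * y * t := by simp only [mul_assoc]
      _ = 0 := by rw [hwxa, zero_mul, zero_mul]

theorem eq_zero_of_altProducts_subset_zero (hR : IsSemiprimeRing R) {a : R} :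
    ∀ {k : ℕ}, altProducts a k ⊆ {0} → a = 0
  | 0, h => h rfl
  | _ + 1, h => eq_zero_of_altProducts_subset_zero hR (altProducts_subset_zero_of_succ hR h)

theorem mul_lie_mul_mem_commPow_eq_zero {g a : R} {k : ℕ}
    (h : ∀ y, ∀ s ∈ commPow R (k + 1), g * y * s * a = 0) (y q b : R) :
    ∀ y', ∀ s ∈ commPow R k, g * y * ⁅q, b⁆ * y' * s * a = 0 := by
  intro y' s hs
  calc g * y * ⁅q, b⁆ * y' * s * a
        = g * y * (⁅q, b * y'⁆ * s) * a - g * (y * b) * (⁅q, y'⁆ * s) * a := by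
          noncomm_ring [Ring.lie_def]
    _ = 0 := by
      rw [h _ _ (mul_mem_commPow_succ (lie_mem_commPow_zero _ _) hs),
        h _ _ (mul_mem_commPow_succ (lie_mem_commPow_zero _ _) hs), sub_self]

theorem mul_lie_mul_eq_zero {g a : R} (h : ∀ y, ∀ s ∈ commPow R 0, g * y * s * a = 0)
    (y q b x : R) : g * y * ⁅q, b⁆ * x * a = 0 :=
  calc g * y * ⁅q, b⁆ * x * a = g * y * ⁅q, b * x⁆ * a - g * (y * b) * ⁅q, x⁆ * a := by
        noncomm_ring [Ring.lie_def]
    _ = 0 := by rw [h _ _ (lie_mem_commPow_zero _ _), h _ _ (lie_mem_commPow_zero _ _), sub_self]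

theorem mul_mem_altProducts_eq_zero {q b : R} :
    ∀ {k : ℕ} {g : R}, (∀ y, ∀ s ∈ commPow R k, g * y * s * ⁅q, b⁆ = 0) →
      ∀ t ∈ altProducts ⁅q, b⁆ (k + 1), ∀ y, g * y * t = 0
  | 0, _, h, _, ⟨x, _, rfl, rfl⟩, y => by
    simpa only [mul_assoc] using mul_lie_mul_eq_zero h y q b x
  | _ + 1, _, h, _, ⟨x, t, ht, rfl⟩, y => by
    simpa only [mul_assoc] using
      mul_mem_altProducts_eq_zero (mul_lie_mul_mem_commPow_eq_zero h y q b) t ht x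

section CommutingElement

variable {K : ℕ} {β : R}

theorem lie_mul_mul_lie_eq_zero (hβ : β ∈ commPow R (K + 1))
    (hβc : ∀ y ∈ commPow R (K + 1), ⁅β, y⁆ = 0) {d s : R} (hd : d ∈ commPow R 0)
    (hs : s ∈ commPow R K) (v : R) : ⁅β, d⁆ * s * ⁅β, v⁆ = 0 := by
  have hv : ⁅β, v⁆ ∈ commPow R (K + 1) := lie_mem_commPow hβ v
  have hsv : s * ⁅β, v⁆ ∈ commPow R (K + 1) :=
    AddSubgroup.subset_closure ⟨s, hs, _, lie_mem_commPow_zero β v, rfl⟩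
  calc ⁅β, d⁆ * s * ⁅β, v⁆
        = ⁅β, d * s⁆ * ⁅β, v⁆ + d * s * ⁅β, ⁅β, v⁆⁆ - d * ⁅β, s * ⁅β, v⁆⁆ := by
          noncomm_ring [Ring.lie_def]
    _ = 0 := by
      rw [hβc _ (mul_mem_commPow_succ hd hs), hβc _ hv, hβc _ hsv]
      simp

theorem lie_mul_lie_mul_eq_zero (hβ : β ∈ commPow R (K + 1))
    (hβc : ∀ y ∈ commPow R (K + 1), ⁅β, y⁆ = 0) {s : R} (hs : s ∈ commPow R K)
    (u v v' : R) : ⁅β, u⁆ * (⁅β, v⁆ * (s * ⁅β, v'⁆)) = 0 := by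
  have hkill (d : R) (hd : d ∈ commPow R 0) : ⁅β, d⁆ * (s * ⁅β, v'⁆) = 0 := by
    rw [← mul_assoc]
    exact lie_mul_mul_lie_eq_zero hβ hβc hd hs v'
  calc ⁅β, u⁆ * (⁅β, v⁆ * (s * ⁅β, v'⁆))
        = β * (⁅β, ⁅u, v⁆⁆ * (s * ⁅β, v'⁆)) - ⁅β, ⁅u, β * v⁆⁆ * (s * ⁅β, v'⁆)
          - ⁅β, ⁅β, u⁆⁆ * (v * (s * ⁅β, v'⁆)) := by
          noncomm_ring [Ring.lie_def]
    _ = 0 := by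
      rw [hkill _ (lie_mem_commPow_zero _ _), hkill _ (lie_mem_commPow_zero _ _),
        hβc _ (lie_mem_commPow hβ u)]
      simp

theorem lie_mul_lie_mul_mul_eq_zero (hβ : β ∈ commPow R (K + 1))
    (hβc : ∀ y ∈ commPow R (K + 1), ⁅β, y⁆ = 0) (u y₀ v y v' : R) :
    ∀ s ∈ commPow R K, ⁅β, u⁆ * y₀ * ⁅β, v⁆ * y * s * ⁅β, v'⁆ = 0 := by
  intro s hs
  have hX (a x c : R) : ⁅β, a⁆ * x * (⁅β, c⁆ * (s * ⁅β, v'⁆)) = 0 :=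
    lie_mul_mul_eq_zero (fun a => lie_mul_lie_mul_eq_zero hβ hβc hs a c v') a x
  calc ⁅β, u⁆ * y₀ * ⁅β, v⁆ * y * s * ⁅β, v'⁆
        = ⁅β, u⁆ * y₀ * (⁅β, v * y⁆ * (s * ⁅β, v'⁆))
          - ⁅β, u⁆ * (y₀ * v) * (⁅β, y⁆ * (s * ⁅β, v'⁆)) := by
          noncomm_ring [Ring.lie_def]
    _ = 0 := by rw [hX, hX, sub_self]

theorem lie_eq_zero_of_commute_commPow (hR : IsSemiprimeRing R)
    (hβ : β ∈ commPow R (K + 1)) (hβc : ∀ y ∈ commPow R (K + 1), ⁅β, y⁆ = 0) (r : R) :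
    ⁅β, r⁆ = 0 := by
  refine eq_zero_of_altProducts_subset_zero hR (k := K + 3) ?_
  rintro _ ⟨y₀, _, ⟨y, t, ht, rfl⟩, rfl⟩
  have hvanish := mul_mem_altProducts_eq_zero
    (lie_mul_lie_mul_mul_eq_zero hβ hβc r y₀ r · r) t ht y
  simpa only [mul_assoc, Set.mem_singleton_iff] using hvanish

end CommutingElement

theorem mul_lie_self_eq_zero (hR : IsSemiprimeRing R) {w : R}
    (hw : ∀ u v r : R, ⁅w * ⁅u, v⁆, r⁆ = 0) (y : R) : w * ⁅y, w⁆ = 0 := by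
  have hkill (u v : R) : w * ⁅u, w⁆ * ⁅v, w⁆ = 0 :=
    calc w * ⁅u, w⁆ * ⁅v, w⁆
          = ⁅w * ⁅u, w * v⁆, w⁆ - ⁅w * ⁅u, w⁆, w⁆ * v - w * ⁅w * ⁅u, v⁆, w⁆ := by
            noncomm_ring [Ring.lie_def]
      _ = 0 := by rw [hw, hw, hw]; simp
  refine hR _ fun x => ?_
  calc w * ⁅y, w⁆ * x * (w * ⁅y, w⁆) = w * ⁅y, w⁆ * (x * w) * ⁅y, w⁆ := by
        simp only [mul_assoc]
    _ = 0 := mul_mul_lie_eq_zero (hkill y) (x * w) y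

theorem lie_eq_zero_of_central (hR : IsSemiprimeRing R) {s x : R}
    (hw : ∀ u v r : R, ⁅⁅s, x⁆ * ⁅u, v⁆, r⁆ = 0) (hws : ∀ r : R, ⁅⁅s, x⁆ * s, r⁆ = 0) :
    ⁅s, x⁆ = 0 := by
  have hself := mul_lie_self_eq_zero hR hw
  set w := ⁅s, x⁆ with hw_def
  have hcube : w * w * w = 0 :=
    calc w * w * w = w * ⁅w * s, x⁆ + w * ⁅x, w⁆ * s := by
          rw [hw_def]; noncomm_ring [Ring.lie_def]
      _ = 0 := by rw [hws, hself]; simp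
  have hsq : w * w = 0 := by
    refine hR _ fun r => ?_
    calc w * w * r * (w * w) = ⁅w * w, r⁆ * (w * w) + r * (w * w * w) * w := by
          noncomm_ring [Ring.lie_def]
      _ = 0 := by rw [hw, hcube]; simp
  refine hR _ fun y => ?_
  calc w * y * w = w * ⁅y, w⁆ + w * w * y := by noncomm_ring [Ring.lie_def]
    _ = 0 := by rw [hself, hsq]; simp

theorem lie_eq_zero_of_commPow_succ_central (hR : IsSemiprimeRing R) {j : ℕ}
    (hc : ∀ z ∈ commPow R (j + 1), ∀ r : R, ⁅z, r⁆ = 0) {s : R} (hs : s ∈ commPow R j)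
    (x : R) : ⁅s, x⁆ = 0 :=
  lie_eq_zero_of_central hR
    (fun u v => hc _ (AddSubgroup.subset_closure
      ⟨_, lie_mem_commPow hs x, _, lie_mem_commPow_zero u v, rfl⟩))
    (hc _ (mul_mem_commPow_succ (lie_mem_commPow_zero s x) hs))

theorem lie_eq_zero_of_mem_commPow_zero (hR : IsSemiprimeRing R) :
    ∀ {j : ℕ}, (∀ z ∈ commPow R j, ∀ r : R, ⁅z, r⁆ = 0) →
      ∀ z ∈ commPow R 0, ∀ r : R, ⁅z, r⁆ = 0
  | 0, hc => hc
  | _ + 1, hc => lie_eq_zero_of_mem_commPow_zero hR fun _ hs =>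
      lie_eq_zero_of_commPow_succ_central hR hc hs

theorem lie_eq_zero_of_lie_central (hR : IsSemiprimeRing R)
    (hc : ∀ a b r : R, ⁅⁅a, b⁆, r⁆ = 0) (x y : R) : ⁅x, y⁆ = 0 := by
  have hkill (r : R) : ⁅x, y⁆ * ⁅r, y⁆ = 0 :=
    calc ⁅x, y⁆ * ⁅r, y⁆ = ⁅⁅x, y * r⁆, y⁆ - y * ⁅⁅x, r⁆, y⁆ - ⁅⁅x, y⁆, y⁆ * r := by
          noncomm_ring [Ring.lie_def]
      _ = 0 := by rw [hc, hc, hc]; simp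
  exact hR _ fun r => mul_mul_lie_eq_zero hkill r x

end

theorem stmt10_general (R : Type*) [NonUnitalRing R] (hR : IsSemiprimeRing R)
    (m n : ℕ)
    (h : ∀ x ∈ sgPow R (commSG R Set.univ Set.univ) (m - 1),
         ∀ y ∈ sgPow R (commSG R Set.univ Set.univ) (n - 1), x * y = y * x) :
    ∀ x y : R, x * y = y * x := by
  set K := 2 * (m - 1) * (n - 1) + 2 * (m - 1) + 2 * (n - 1)
  have hcomm : ∀ x ∈ commPow R (K + 1), ∀ y ∈ commPow R (K + 1), x * y = y * x := by
    have := commute_of_mem_commPow h (2 * (n - 1) + 1) (2 * (m - 1) + 1)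
    rwa [show (2 * (n - 1) + 1) * (m - 1 + 1) + (m - 1) = K + 1 by ring,
      show (2 * (m - 1) + 1) * (n - 1 + 1) + (n - 1) = K + 1 by ring] at this
  have hcentral : ∀ z ∈ commPow R (K + 1), ∀ r : R, ⁅z, r⁆ = 0 := fun z hz =>
    lie_eq_zero_of_commute_commPow hR hz fun y hy => by
      rw [Ring.lie_def, hcomm z hz y hy, sub_self]
  have hL (a b : R) : ∀ r : R, ⁅⁅a, b⁆, r⁆ = 0 :=
    lie_eq_zero_of_mem_commPow_zero hR hcentral _ (lie_mem_commPow_zero a b)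
  intro x y
  rw [← sub_eq_zero, ← Ring.lie_def]
  exact lie_eq_zero_of_lie_central hR hL x y

/-- in a semiprime ring, [[R,R]^m, [R,R]^n] = 0 implies R is commutative. -/
theorem stmt10 (R : Type*) [NonUnitalRing R] (hR : IsSemiprimeRing R)
    (m n : ℕ) (hm : 1 ≤ m) (hn : 1 ≤ n)
    (h : ∀ x ∈ sgPow R (commSG R Set.univ Set.univ) (m - 1),
         ∀ y ∈ sgPow R (commSG R Set.univ Set.univ) (n - 1), x * y = y * x) :
    ∀ x y : R, x * y = y * x :=
  stmt10_general R hR m n h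
end
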